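/- The row-adjusted join matrix factorizes as [S]_{f_1,…,f_n} = Υ' (E'_{D'})^T, i.e. for all i, j ∈ {1,…,n} we have f_i(x_i ∨ x_j) = Σ_{k=1}^{m'} (E'_{D'})_{ik} Ψ'_{D',f_i}(d'_k) (E'_{D'})_{jk}. -/

import Mathlib

open Finset
open scoped Classical

/-!
Let `Z` be the zeta matrix of the listing `d` of `D'`, `Z k l = 1` iff `d k ≤ d l`. The Möbius
recursion says exactly that `μ Z = 1`, hence also `Z μ = 1`, which is Möbius inversion:
`g (d k) = ∑_{d k ≤ d l} Ψ_g (d l)`. Applied at `d k = x i ⊔ x j`, the condition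
`x i ⊔ x j ≤ d l` splits as `x i ≤ d l ∧ x j ≤ d l`, i.e. as the product `E'_{i l} E'_{j l}`.
-/

noncomputable section Moebius

open Matrix

variable {ι α R : Type*} [Fintype ι] [Preorder α] [CommRing R]

def zetaMatrix (d : ι → α) : Matrix ι ι R :=
  Matrix.of fun k l => if d k ≤ d l then 1 else 0

def moebiusTransform (d : ι → α) (μ : ι → ι → R) (g : ι → R) (k : ι) : R :=
  ∑ v ∈ univ.filter (fun v => d k ≤ d v), g v * μ k v

variable {d : ι → α} {μ : ι → ι → R}

theorem moebius_mul_zetaMatrix [DecidableEq ι] (hμ0 : ∀ k l, ¬ d k ≤ d l → μ k l = 0)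
    (hμ : ∀ k l, d k ≤ d l →
      (∑ v ∈ univ.filter (fun v => d k ≤ d v ∧ d v ≤ d l), μ k v) = if k = l then 1 else 0) :
    Matrix.of μ * zetaMatrix d = 1 := by
  ext k l
  have hterm : ∀ v, μ k v * (if d v ≤ d l then 1 else 0) =
      if d k ≤ d v ∧ d v ≤ d l then μ k v else 0 := by
    intro v
    by_cases hkv : d k ≤ d v
    · simp [hkv]
    · simp [hkv, hμ0 k v hkv]
  simp only [Matrix.mul_apply, zetaMatrix, Matrix.of_apply, hterm, ← sum_filter]
  by_cases hkl : d k ≤ d l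
  · rw [hμ k l hkl, Matrix.one_apply]
  · have hne : k ≠ l := fun h => hkl (h ▸ le_rfl)
    rw [Matrix.one_apply_ne hne]
    exact sum_eq_zero fun v hv => absurd (le_trans (mem_filter.1 hv).2.1 (mem_filter.1 hv).2.2) hkl

theorem moebiusTransform_eq_mulVec (hμ0 : ∀ k l, ¬ d k ≤ d l → μ k l = 0) (g : ι → R) :
    moebiusTransform d μ g = Matrix.of μ *ᵥ g := by
  ext k
  rw [moebiusTransform, sum_filter, Matrix.mulVec, dotProduct]
  refine sum_congr rfl fun v _ => ?_
  by_cases hkv : d k ≤ d v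
  · simp [hkv, mul_comm]
  · simp [hkv, hμ0 k v hkv]

theorem eq_sum_moebiusTransform [DecidableEq ι] (hμ0 : ∀ k l, ¬ d k ≤ d l → μ k l = 0)
    (hμ : ∀ k l, d k ≤ d l →
      (∑ v ∈ univ.filter (fun v => d k ≤ d v ∧ d v ≤ d l), μ k v) = if k = l then 1 else 0)
    (g : ι → R) (k : ι) :
    g k = ∑ l ∈ univ.filter (fun l => d k ≤ d l), moebiusTransform d μ g l := by
  have hzeta : zetaMatrix d * Matrix.of μ = 1 :=
    mul_eq_one_comm.1 (moebius_mul_zetaMatrix hμ0 hμ)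
  calc g k = ((zetaMatrix d * Matrix.of μ) *ᵥ g) k := by rw [hzeta, Matrix.one_mulVec]
    _ = (zetaMatrix d *ᵥ moebiusTransform d μ g) k := by
      rw [← Matrix.mulVec_mulVec, moebiusTransform_eq_mulVec hμ0]
    _ = _ := by simp [mulVec, dotProduct, zetaMatrix, sum_filter]

end Moebius

theorem row_adjusted_join_matrix_factorization_general
    {P : Type*} [Lattice P] {n m : ℕ}
    (x : Fin n → P) (d : Fin m → P) (f : Fin n → P → ℂ)
    (μD : Fin m → Fin m → ℂ)
    (hD : ∀ i j : Fin n, ∃ k : Fin m, d k = x i ⊔ x j)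
    (hμ0 : ∀ i j : Fin m, ¬ d i ≤ d j → μD i j = 0)
    (hμ : ∀ i j : Fin m, d i ≤ d j →
      (∑ v ∈ univ.filter (fun v => d i ≤ d v ∧ d v ≤ d j), μD i v) =
        if i = j then 1 else 0) :
    ∀ i j : Fin n,
      f i (x i ⊔ x j) =
        ∑ k : Fin m,
          (if x i ≤ d k then (1 : ℂ) else 0) *
            (∑ v ∈ univ.filter (fun v => d k ≤ d v), f i (d v) * μD k v) *
            (if x j ≤ d k then (1 : ℂ) else 0) := by
  intro i j
  obtain ⟨k₀, hk₀⟩ := hD i j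
  rw [← hk₀, eq_sum_moebiusTransform hμ0 hμ (fun v => f i (d v)) k₀, sum_filter]
  refine sum_congr rfl fun k _ => ?_
  rw [hk₀]
  by_cases hik : x i ≤ d k <;> by_cases hjk : x j ≤ d k <;>
    simp [moebiusTransform, sup_le_iff, hik, hjk]

/-- **Structure theorem for row-adjusted join matrices.**
Let `d' : Fin m → P` be an injective, compatibly ordered listing of a set `D'`
containing all joins `x i ⊔ x j`, `μD'` the Möbius function of the finite poset
`D'`, `Ψ'_{D',f i}(d' k) = ∑_{d' k ≤ d' v} f i (d' v) * μD' k v`, and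
`(E'_{D'})_{i k} = 1` iff `x i ≤ d' k`. Then
`f i (x i ⊔ x j) = ∑ k, (E'_{D'})_{i k} * Ψ'_{D',f i}(d' k) * (E'_{D'})_{j k}`,
i.e. `[S]_{f₁,…,fₙ} = Υ' (E'_{D'})ᵀ`. -/
theorem row_adjusted_join_matrix_factorization
    {P : Type*} [Lattice P] {n m : ℕ}
    (x : Fin n → P) (d : Fin m → P) (f : Fin n → P → ℂ)
    (μD : Fin m → Fin m → ℂ)
    (hxinj : Function.Injective x)
    (hxord : ∀ i j : Fin n, x i ≤ x j → i ≤ j)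
    (hdinj : Function.Injective d)
    (hdord : ∀ i j : Fin m, d i ≤ d j → i ≤ j)
    (hD : ∀ i j : Fin n, ∃ k : Fin m, d k = x i ⊔ x j)
    (hμ0 : ∀ i j : Fin m, ¬ d i ≤ d j → μD i j = 0)
    (hμ : ∀ i j : Fin m, d i ≤ d j →
      (∑ v ∈ univ.filter (fun v => d i ≤ d v ∧ d v ≤ d j), μD i v) =
        if i = j then 1 else 0) :
    ∀ i j : Fin n,
      f i (x i ⊔ x j) =
        ∑ k : Fin m,
          (if x i ≤ d k then (1 : ℂ) else 0) *
            (∑ v ∈ univ.filter (fun v => d k ≤ d v), f i (d v) * μD k v) *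
            (if x j ≤ d k then (1 : ℂ) else 0) :=
  row_adjusted_join_matrix_factorization_general x d f μD hD hμ0 hμ
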